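/- For the vector fields X̂₁(q,p,u,v) = (sin p, 0, v·cos p, 0) and X̂₂(q,p,u,v) = (0, q, 0, u) on ℝ⁴ (the lifted standard-map model), one has [X̂₁,X̂₂](q,p,u,v) = (−q cos p, sin p, −u cos p + q v sin p, v cos p) and [X̂₁,[X̂₁,X̂₂]](q,p,u,v) = (−2 cos p sin p, 0, −2v cos 2p, 0); moreover the determinant of the 4×4 matrix (X̂₁, X̂₂, [X̂₁,X̂₂], [X̂₁,[X̂₁,X̂₂]]) at (π/3, π/3, √2/2, √2/2) equals (9 − √3·π)/16 ≠ 0. -/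

import Mathlib

/-!
At `stdPt` the `p`- and `v`-rows of the matrix vanish outside the columns `X̂₂`, `[X̂₁,X̂₂]`, so
the determinant is minus the `(q,u)`-minor of `X̂₁`, `[X̂₁,[X̂₁,X̂₂]]` times the `(p,v)`-minor of
`X̂₂`, `[X̂₁,X̂₂]`:
`-(3√6/8) · (π√2/12 - √6/4) = (9 - √3π)/16`, which is positive since `√3 π < 2 · 4`.
-/

open Real

/-- The Lie bracket of vector fields on `ℝ⁴`: `[X,Y](x) = DY(x)·X(x) − DX(x)·Y(x)`. -/
noncomputable def lieBracketR4 (X Y : (Fin 4 → ℝ) → (Fin 4 → ℝ)) (x : Fin 4 → ℝ) :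
    Fin 4 → ℝ :=
  fderiv ℝ Y x (X x) - fderiv ℝ X x (Y x)

/-- Lifted shear vector field: `X̂₁(q,p,u,v) = (sin p, 0, v cos p, 0)`. -/
noncomputable def stdX1 (x : Fin 4 → ℝ) : Fin 4 → ℝ :=
  ![Real.sin (x 1), 0, x 3 * Real.cos (x 1), 0]

/-- Lifted standard-map vector field: `X̂₂(q,p,u,v) = (0, q, 0, u)`. -/
noncomputable def stdX2 (x : Fin 4 → ℝ) : Fin 4 → ℝ :=
  ![0, x 0, 0, x 2]

/-- The point `(π/3, π/3, √2/2, √2/2)`. -/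
noncomputable def stdPt : Fin 4 → ℝ :=
  ![Real.pi / 3, Real.pi / 3, Real.sqrt 2 / 2, Real.sqrt 2 / 2]

@[fun_prop]
theorem Differentiable.vecCons {𝕜 E F : Type*} [NontriviallyNormedField 𝕜] [NormedAddCommGroup E]
    [NormedSpace 𝕜 E] [NormedAddCommGroup F] [NormedSpace 𝕜 F] {n : ℕ} {f : E → F}
    {g : E → Fin n → F} (hf : Differentiable 𝕜 f) (hg : Differentiable 𝕜 g) :
    Differentiable 𝕜 fun x => Matrix.vecCons (f x) (g x) :=
  hf.finCons hg

theorem fderiv_eval {𝕜 ι F : Type*} [NontriviallyNormedField 𝕜] [Fintype ι] [NormedAddCommGroup F]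
    [NormedSpace 𝕜 F] (x : ι → F) (i : ι) :
    fderiv 𝕜 (fun y : ι → F => y i) x = ContinuousLinearMap.proj i :=
  (hasFDerivAt_apply i x).fderiv

theorem lieBracketR4_apply {X Y : (Fin 4 → ℝ) → Fin 4 → ℝ} {x : Fin 4 → ℝ}
    (hX : DifferentiableAt ℝ X x) (hY : DifferentiableAt ℝ Y x) (i : Fin 4) :
    lieBracketR4 X Y x i =
      fderiv ℝ (fun y => Y y i) x (X x) - fderiv ℝ (fun y => X y i) x (Y x) := by
  simp [lieBracketR4, fderiv_apply hX, fderiv_apply hY]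

theorem differentiable_stdX1 : Differentiable ℝ stdX1 := by
  unfold stdX1
  fun_prop

theorem differentiable_stdX2 : Differentiable ℝ stdX2 := by
  unfold stdX2
  fun_prop

theorem lieBracketR4_stdX1_stdX2 (x : Fin 4 → ℝ) :
    lieBracketR4 stdX1 stdX2 x =
      ![-(x 0) * cos (x 1), sin (x 1), -(x 2) * cos (x 1) + x 0 * x 3 * sin (x 1),
        x 3 * cos (x 1)] := by
  funext i
  rw [lieBracketR4_apply differentiable_stdX1.differentiableAt
    differentiable_stdX2.differentiableAt]
  fin_cases i <;> simp (disch := fun_prop) [stdX1, stdX2, fderiv_fun_mul, fderiv_eval] <;> ring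

theorem lieBracketR4_stdX1_lieBracketR4_stdX1_stdX2 (x : Fin 4 → ℝ) :
    lieBracketR4 stdX1 (lieBracketR4 stdX1 stdX2) x =
      ![-2 * cos (x 1) * sin (x 1), 0, -2 * x 3 * cos (2 * x 1), 0] := by
  rw [funext lieBracketR4_stdX1_stdX2]
  funext i
  rw [lieBracketR4_apply differentiable_stdX1.differentiableAt (by fun_prop)]
  fin_cases i <;>
    simp (disch := fun_prop) [stdX1, fderiv_fun_mul, fderiv_fun_add, fderiv_eval, cos_two_mul]
  · ring
  · linear_combination (2 * x 3) * sin_sq_add_cos_sq (x 1)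

theorem Matrix.det_fin_four_eq_neg_minor_mul_minor {R : Type*} [CommRing R]
    (a b c d e f g h k l : R) :
    !![a, 0, b, c; 0, d, e, 0; f, 0, g, h; 0, k, l, 0].det =
      -((a * h - c * f) * (d * l - e * k)) := by
  simp [Matrix.det_succ_row_zero, Fin.sum_univ_succ, Fin.succAbove]
  ring

noncomputable def hormanderMatrix (X Y : (Fin 4 → ℝ) → Fin 4 → ℝ) (x : Fin 4 → ℝ) :
    Matrix (Fin 4) (Fin 4) ℝ :=
  Matrix.of fun i j => ![X x, Y x, lieBracketR4 X Y x, lieBracketR4 X (lieBracketR4 X Y) x] j i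

theorem hormanderMatrix_stdX1_stdX2_stdPt :
    hormanderMatrix stdX1 stdX2 stdPt =
      !![√3 / 2, 0, -(π / 6), -(√3 / 2);
        0, π / 3, √3 / 2, 0;
        √2 / 4, 0, π * √2 * √3 / 12 - √2 / 4, √2 / 2;
        0, √2 / 2, √2 / 4, 0] := by
  have hcos : cos (2 * (π / 3)) = -(1 / 2) := by
    rw [cos_two_mul, cos_pi_div_three]
    norm_num
  ext i j
  fin_cases i <;> fin_cases j <;>
    simp [hormanderMatrix, lieBracketR4_stdX1_stdX2, lieBracketR4_stdX1_lieBracketR4_stdX1_stdX2,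
      stdX1, stdX2, stdPt, hcos, sin_pi_div_three, cos_pi_div_three] <;> ring

theorem det_hormanderMatrix_stdX1_stdX2_stdPt :
    (hormanderMatrix stdX1 stdX2 stdPt).det = (9 - √3 * π) / 16 := by
  have h2 : √2 ^ 2 = 2 := sq_sqrt (by norm_num)
  have h3 : √3 ^ 2 = 3 := sq_sqrt (by norm_num)
  rw [hormanderMatrix_stdX1_stdX2_stdPt, Matrix.det_fin_four_eq_neg_minor_mul_minor]
  linear_combination (-(1 / 32) * √3 * π + (3 / 32) * √3 ^ 2) * h2 + (3 / 16) * h3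

theorem sqrt_three_mul_pi_lt_nine : √3 * π < 9 := by
  have hsqrt : √3 < 2 := by
    rw [sqrt_lt' two_pos]
    norm_num
  nlinarith [sqrt_nonneg 3, pi_pos, pi_lt_four]

theorem standard_map_hormander_determinant :
    (∀ x : Fin 4 → ℝ, lieBracketR4 stdX1 stdX2 x =
      ![-(x 0) * Real.cos (x 1), Real.sin (x 1),
        -(x 2) * Real.cos (x 1) + x 0 * x 3 * Real.sin (x 1),
        x 3 * Real.cos (x 1)]) ∧
    (∀ x : Fin 4 → ℝ, lieBracketR4 stdX1 (lieBracketR4 stdX1 stdX2) x =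
      ![-2 * Real.cos (x 1) * Real.sin (x 1), 0,
        -2 * x 3 * Real.cos (2 * x 1), 0]) ∧
    (Matrix.of (fun i j : Fin 4 =>
        (![stdX1 stdPt, stdX2 stdPt,
           lieBracketR4 stdX1 stdX2 stdPt,
           lieBracketR4 stdX1 (lieBracketR4 stdX1 stdX2) stdPt] j) i)).det
      = (9 - Real.sqrt 3 * Real.pi) / 16 ∧
    (Matrix.of (fun i j : Fin 4 =>
        (![stdX1 stdPt, stdX2 stdPt,
           lieBracketR4 stdX1 stdX2 stdPt,
           lieBracketR4 stdX1 (lieBracketR4 stdX1 stdX2) stdPt] j) i)).det ≠ 0 := by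
  have hdet := det_hormanderMatrix_stdX1_stdX2_stdPt
  exact ⟨lieBracketR4_stdX1_stdX2, lieBracketR4_stdX1_lieBracketR4_stdX1_stdX2, hdet,
    hdet.trans_ne (div_pos (sub_pos.2 sqrt_three_mul_pi_lt_nine) (by norm_num)).ne'⟩
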